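/- arXiv:1608.04348 — 2 statements merged into one kernel-verified Lean document; each statement's English description precedes it below -/
import Mathlib

section
/- Let u(x₁,x₂) = 2√(x₁x₂) on (0,1)². Then the function v(x₁,x₂) = −log(x₂)·√(x₁x₂) satisfies the transport equation ∇v · ∇⊥u = 1 on (0,1)², where ∇⊥u = (u_{x₂}, −u_{x₁}), and v = 0 on the set {x₂ = 1}. -/
/-- With `u x₁ x₂ = 2√(x₁x₂)`, the function `v x₁ x₂ = -log x₂ · √(x₁x₂)` satisfies
the transport equation `u_{x₂} v_{x₁} - u_{x₁} v_{x₂} = 1` on `(0,1)²` and `v = 0`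
on `{x₂ = 1}`. -/
theorem stmt3 (u v : ℝ → ℝ → ℝ)
    (hu : ∀ x₁ x₂, u x₁ x₂ = 2 * Real.sqrt (x₁ * x₂))
    (hv : ∀ x₁ x₂, v x₁ x₂ = -Real.log x₂ * Real.sqrt (x₁ * x₂)) :
    (∀ x₁ x₂ : ℝ, x₁ ∈ Set.Ioo (0:ℝ) 1 → x₂ ∈ Set.Ioo (0:ℝ) 1 →
      ∃ ux1 ux2 vx1 vx2 : ℝ,
        HasDerivAt (fun t => u t x₂) ux1 x₁ ∧
        HasDerivAt (fun t => u x₁ t) ux2 x₂ ∧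
        HasDerivAt (fun t => v t x₂) vx1 x₁ ∧
        HasDerivAt (fun t => v x₁ t) vx2 x₂ ∧
        ux2 * vx1 - ux1 * vx2 = 1) ∧
    (∀ x₁ : ℝ, v x₁ 1 = 0) := by
  constructor
  · intro x₁ x₂ h1 h2
    have h1p : 0 < x₁ := h1.1
    have h2p : 0 < x₂ := h2.1
    have h1n : x₁ ≠ 0 := ne_of_gt h1p
    have h2n : x₂ ≠ 0 := ne_of_gt h2p
    have s1p : 0 < Real.sqrt x₁ := Real.sqrt_pos.mpr h1p
    have s2p : 0 < Real.sqrt x₂ := Real.sqrt_pos.mpr h2p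
    have s1n : Real.sqrt x₁ ≠ 0 := ne_of_gt s1p
    have s2n : Real.sqrt x₂ ≠ 0 := ne_of_gt s2p
    have sq2 : Real.sqrt x₂ * Real.sqrt x₂ = x₂ := Real.mul_self_sqrt h2p.le
    refine ⟨2 * (1 / (2 * Real.sqrt x₁) * Real.sqrt x₂),
      2 * (Real.sqrt x₁ * (1 / (2 * Real.sqrt x₂))),
      -Real.log x₂ * (1 / (2 * Real.sqrt x₁) * Real.sqrt x₂),
      Real.sqrt x₁ * -(x₂⁻¹ * Real.sqrt x₂ + Real.log x₂ * (1 / (2 * Real.sqrt x₂))),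
      ?_, ?_, ?_, ?_, ?_⟩
    · have e : (fun t => u t x₂) = fun t => 2 * (Real.sqrt t * Real.sqrt x₂) := by
        funext t; rw [hu, Real.sqrt_mul' t h2p.le]
      rw [e]
      exact ((Real.hasDerivAt_sqrt h1n).mul_const _).const_mul 2
    · have e : (fun t => u x₁ t) = fun t => 2 * (Real.sqrt x₁ * Real.sqrt t) := by
        funext t; rw [hu, Real.sqrt_mul h1p.le]
      rw [e]
      exact ((Real.hasDerivAt_sqrt h2n).const_mul _).const_mul 2
    · have e : (fun t => v t x₂) = fun t => -Real.log x₂ * (Real.sqrt t * Real.sqrt x₂) := by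
        funext t; rw [hv, Real.sqrt_mul' t h2p.le]
      rw [e]
      exact ((Real.hasDerivAt_sqrt h1n).mul_const _).const_mul _
    · have e : (fun t => v x₁ t) = fun t => Real.sqrt x₁ * -(Real.log t * Real.sqrt t) := by
        funext t; rw [hv, Real.sqrt_mul h1p.le]; ring
      rw [e]
      exact (((Real.hasDerivAt_log h2n).mul (Real.hasDerivAt_sqrt h2n)).neg).const_mul _
    · field_simp
      nlinarith [sq2, s1p, s2p, mul_pos s1p s1p, sq_nonneg (Real.sqrt x₁ * Real.sqrt x₂)]
  · intro x₁
    simp [hv]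
end

section
/- Let u(x₁,x₂) = 2√(x₁x₂) and v(x₁,x₂) = −log(x₂)·√(x₁x₂) on (0,1)². Then the function w(x₁,x₂) = log(x₂)/(log(x₁) + log(x₂)) satisfies v·(∇w · ∇⊥u) = w on the subset of (0,1)² where log(x₁) + log(x₂) ≠ 0, and w = 1 on the set {x₁ = 1} ∩ (0,1)² (taking the limit x₁ → 1). -/
/-- With `u x₁ x₂ = 2√(x₁x₂)` and `v x₁ x₂ = -log x₂ · √(x₁x₂)`, the function
`w x₁ x₂ = log x₂ / (log x₁ + log x₂)` satisfies `v·(u_{x₂}w_{x₁} - u_{x₁}w_{x₂}) = w`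
on the part of `(0,1)²` where `log x₁ + log x₂ ≠ 0`, and `w = 1` on `{x₁ = 1}`. -/
theorem stmt4 (u v w : ℝ → ℝ → ℝ)
    (hu : ∀ x₁ x₂, u x₁ x₂ = 2 * Real.sqrt (x₁ * x₂))
    (hv : ∀ x₁ x₂, v x₁ x₂ = -Real.log x₂ * Real.sqrt (x₁ * x₂))
    (hw : ∀ x₁ x₂, w x₁ x₂ = Real.log x₂ / (Real.log x₁ + Real.log x₂)) :
    (∀ x₁ x₂ : ℝ, x₁ ∈ Set.Ioo (0:ℝ) 1 → x₂ ∈ Set.Ioo (0:ℝ) 1 →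
      Real.log x₁ + Real.log x₂ ≠ 0 →
      ∃ ux1 ux2 wx1 wx2 : ℝ,
        HasDerivAt (fun t => u t x₂) ux1 x₁ ∧
        HasDerivAt (fun t => u x₁ t) ux2 x₂ ∧
        HasDerivAt (fun t => w t x₂) wx1 x₁ ∧
        HasDerivAt (fun t => w x₁ t) wx2 x₂ ∧
        v x₁ x₂ * (ux2 * wx1 - ux1 * wx2) = w x₁ x₂) ∧
    (∀ x₂ : ℝ, x₂ ∈ Set.Ioo (0:ℝ) 1 → w 1 x₂ = 1) := by
  constructor
  · intro x₁ x₂ hx₁ hx₂ hS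
    obtain ⟨h1, h1'⟩ := hx₁
    obtain ⟨h2, h2'⟩ := hx₂
    have h1ne : x₁ ≠ 0 := ne_of_gt h1
    have h2ne : x₂ ≠ 0 := ne_of_gt h2
    set a := Real.sqrt x₁ with ha
    set b := Real.sqrt x₂ with hb
    have hapos : 0 < a := Real.sqrt_pos.2 h1
    have hbpos : 0 < b := Real.sqrt_pos.2 h2
    have haa : a * a = x₁ := Real.mul_self_sqrt h1.le
    have hbb : b * b = x₂ := Real.mul_self_sqrt h2.le
    set L₁ := Real.log x₁ with hL₁
    set L₂ := Real.log x₂ with hL₂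
    set S := L₁ + L₂ with hSdef
    -- derivative of u in x₁
    have du1 : HasDerivAt (fun t => u t x₂) (2 * (b * (1 / (2 * a)))) x₁ := by
      have : (fun t => u t x₂) = fun t => 2 * (b * Real.sqrt t) := by
        funext t
        rw [hu, mul_comm t x₂, Real.sqrt_mul h2.le]
      rw [this]
      exact ((Real.hasDerivAt_sqrt h1ne).const_mul b).const_mul 2
    have du2 : HasDerivAt (fun t => u x₁ t) (2 * (a * (1 / (2 * b)))) x₂ := by
      have : (fun t => u x₁ t) = fun t => 2 * (a * Real.sqrt t) := by
        funext t
        rw [hu, Real.sqrt_mul h1.le]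
      rw [this]
      exact ((Real.hasDerivAt_sqrt h2ne).const_mul a).const_mul 2
    -- derivative of w in x₁
    have dw1 : HasDerivAt (fun t => w t x₂)
        ((0 * (Real.log x₁ + L₂) - L₂ * x₁⁻¹) / (Real.log x₁ + L₂) ^ 2) x₁ := by
      have : (fun t => w t x₂) = fun t => L₂ / (Real.log t + L₂) := by
        funext t; rw [hw]
      rw [this]
      exact (hasDerivAt_const x₁ L₂).div
        ((Real.hasDerivAt_log h1ne).add_const L₂) hS
    have dw2 : HasDerivAt (fun t => w x₁ t)
        ((x₂⁻¹ * (L₁ + Real.log x₂) - Real.log x₂ * x₂⁻¹) / (L₁ + Real.log x₂) ^ 2) x₂ := by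
      have : (fun t => w x₁ t) = fun t => Real.log t / (L₁ + Real.log t) := by
        funext t; rw [hw]
      rw [this]
      exact (Real.hasDerivAt_log h2ne).div
        ((Real.hasDerivAt_log h2ne).const_add L₁) hS
    refine ⟨_, _, _, _, du1, du2, dw1, dw2, ?_⟩
    rw [hv, hw, Real.sqrt_mul h1.le, ← ha, ← hb, ← hL₁, ← hL₂, ← hSdef]
    have h1' : x₁ = a * a := haa.symm
    have h2' : x₂ = b * b := hbb.symm
    rw [h1', h2']
    field_simp
    ring
  · intro x₂ hx₂
    have : Real.log x₂ ≠ 0 := ne_of_lt (Real.log_neg hx₂.1 hx₂.2)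
    rw [hw, Real.log_one, zero_add, div_self this]
end
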